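/- Let R be a Γ-graded von Neumann regular graded right self-injective ring and J a graded two-sided ideal of R such that R/J is graded nonsingular, i.e. for every homogeneous x ∈ R with x ∉ J, the graded right ideal {r ∈ R : xr ∈ J} is not graded essential in R. Then J = eR for some central homogeneous idempotent e of R. -/

import Mathlib

/- Setting: `Γ = ι` an additive abelian group, `R` a `ι`-graded ring with identity,
with homogeneous components the additive subgroups `𝒜 γ`. -/

variable {ι R : Type*}

section Defs
variable [DecidableEq ι] [AddCommGroup ι] [Ring R] (𝒜 : ι → AddSubgroup R) [GradedRing 𝒜]

/-- An element of `R` is homogeneous if it lies in some component `𝒜 γ`. -/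
def IsHomog (a : R) : Prop := ∃ γ : ι, a ∈ 𝒜 γ

/-- `R` is graded von Neumann regular: every homogeneous element has an inner inverse. -/
def GradedVNRegular : Prop := ∀ a : R, IsHomog 𝒜 a → ∃ b : R, a * b * a = a

/-- A subset of `R` is a right ideal. -/
def IsRightIdealSet (I : Set R) : Prop :=
  (0 : R) ∈ I ∧ (∀ x ∈ I, ∀ y ∈ I, x + y ∈ I) ∧ ∀ x ∈ I, ∀ r : R, x * r ∈ I

/-- A graded right ideal: a right ideal containing all homogeneous components of
its elements. -/
def IsGradedRightIdeal (I : Set R) : Prop :=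
  IsRightIdealSet I ∧ ∀ x ∈ I, ∀ γ : ι, ((DirectSum.decompose 𝒜 x γ : 𝒜 γ) : R) ∈ I

/-- `A` is graded essential in `B` (as graded right ideals): `A ⊆ B` and every nonzero
graded right ideal contained in `B` meets `A` nontrivially. -/
def GradedEssentialIn (A B : Set R) : Prop :=
  A ⊆ B ∧ ∀ J : Set R, IsGradedRightIdeal 𝒜 J → J ⊆ B → (∃ x ∈ J, x ≠ 0) →
    ∃ x, x ∈ A ∩ J ∧ x ≠ 0

/-- Graded Baer criterion: `R` is graded right self-injective. A homomorphism from a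
graded right ideal `I` to `R` is encoded as a function `f : R → R` which is additive on
`I`, right `R`-linear on `I`, and of degree `γ` on `I`. -/
def GradedSelfInjective : Prop :=
  ∀ I : Set R, IsGradedRightIdeal 𝒜 I → ∀ γ : ι, ∀ f : R → R,
    (∀ x ∈ I, ∀ y ∈ I, f (x + y) = f x + f y) →
    (∀ x ∈ I, ∀ r : R, f (x * r) = f x * r) →
    (∀ δ : ι, ∀ x ∈ I, x ∈ 𝒜 δ → f x ∈ 𝒜 (γ + δ)) →
    ∃ c ∈ 𝒜 γ, ∀ x ∈ I, f x = c * x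

/-- A graded two-sided ideal of `R`. -/
def IsGradedTwoSidedIdeal (J : Set R) : Prop :=
  IsGradedRightIdeal 𝒜 J ∧ ∀ x ∈ J, ∀ r : R, r * x ∈ J

end Defs

/-! Let `K` be the right annihilator of `J`. Graded regularity gives `J ∩ K = 0` and makes
`J + K` graded essential in `R`. Graded self-injectivity extends the projection `J ⊕ K → J` to
left multiplication by some `e ∈ R₀`, so `e` fixes `J` and kills `K`. Since `{r | e * r ∈ J}`
contains `J + K`, nonsingularity of `R/J` puts `e` in `J`. For `j ∈ J`, `j - j * e` annihilates
the essential ideal `J + K`, so it vanishes because `R` itself is graded nonsingular (again by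
regularity). Thus `e` is a two-sided identity for `J`, and `e * r = e * r * e = r * e`. -/

open DirectSum
open scoped Pointwise

theorem DirectSum.mem_of_forall_decompose_mem {σ M : Type*} [DecidableEq ι] [AddCommMonoid M]
    [SetLike σ M] [AddSubmonoidClass σ M] (ℳ : ι → σ) [Decomposition ℳ] {S : AddSubmonoid M}
    {x : M} (h : ∀ i, (decompose ℳ x i : M) ∈ S) : x ∈ S := by
  classical
  rw [← sum_support_decompose ℳ x]
  exact S.sum_mem fun i _ => h i

section RightIdeal
variable [Ring R] {I : Set R}

theorem IsRightIdealSet.neg_mem (hI : IsRightIdealSet I) {x : R} (hx : x ∈ I) : -x ∈ I := by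
  simpa using hI.2.2 x hx (-1)

theorem IsRightIdealSet.sub_mem (hI : IsRightIdealSet I) {x y : R} (hx : x ∈ I) (hy : y ∈ I) :
    x - y ∈ I := by
  rw [sub_eq_add_neg]
  exact hI.2.1 x hx _ (hI.neg_mem hy)

def rightAnnihilator (J : Set R) : Set R := {x | ∀ j ∈ J, j * x = 0}

/-- The projection `J ⊕ K → J`, extended arbitrarily outside `J + K`. -/
noncomputable def firstSummand (J K : Set R) (x : R) : R :=
  Classical.epsilon fun j => j ∈ J ∧ x - j ∈ K

theorem firstSummand_add {J K : Set R} (hJ : IsRightIdealSet J) (hK : IsRightIdealSet K)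
    (hJK : ∀ x ∈ J, x ∈ K → x = 0) {j k : R} (hj : j ∈ J) (hk : k ∈ K) :
    firstSummand J K (j + k) = j := by
  obtain ⟨hj', hk'⟩ : firstSummand J K (j + k) ∈ J ∧ j + k - firstSummand J K (j + k) ∈ K :=
    Classical.epsilon_spec (p := fun j' => j' ∈ J ∧ j + k - j' ∈ K)
      ⟨j, hj, by rwa [add_sub_cancel_left]⟩
  have hdiff : j - firstSummand J K (j + k) = (j + k - firstSummand J K (j + k)) - k := by abel
  refine (sub_eq_zero.1 (hJK _ (hJ.sub_mem hj hj') ?_)).symm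
  rw [hdiff]
  exact hK.sub_mem hk' hk

end RightIdeal

section Graded
variable [DecidableEq ι] [AddCommGroup ι] [Ring R] {𝒜 : ι → AddSubgroup R} [GradedRing 𝒜]

theorem IsGradedRightIdeal.add {I K : Set R} (hI : IsGradedRightIdeal 𝒜 I)
    (hK : IsGradedRightIdeal 𝒜 K) : IsGradedRightIdeal 𝒜 (I + K) := by
  refine ⟨⟨⟨0, hI.1.1, 0, hK.1.1, add_zero 0⟩, ?_, ?_⟩, ?_⟩
  · rintro _ ⟨a, ha, b, hb, rfl⟩ _ ⟨c, hc, d, hd, rfl⟩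
    exact ⟨a + c, hI.1.2.1 a ha c hc, b + d, hK.1.2.1 b hb d hd, add_add_add_comm a c b d⟩
  · rintro _ ⟨a, ha, b, hb, rfl⟩ r
    exact ⟨a * r, hI.1.2.2 a ha r, b * r, hK.1.2.2 b hb r, (add_mul a b r).symm⟩
  · rintro _ ⟨a, ha, b, hb, rfl⟩ γ
    exact ⟨_, hI.2 a ha γ, _, hK.2 b hb γ, by
      simp only [decompose_add, DirectSum.add_apply, AddSubgroup.coe_add]⟩

theorem IsGradedRightIdeal.exists_homog_ne_zero {I : Set R} (hI : IsGradedRightIdeal 𝒜 I)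
    {x : R} (hx : x ∈ I) (hx0 : x ≠ 0) : ∃ y ∈ I, IsHomog 𝒜 y ∧ y ≠ 0 := by
  by_contra! h
  exact hx0 (mem_of_forall_decompose_mem 𝒜 (S := ⊥) fun γ =>
    h _ (hI.2 x hx γ) ⟨γ, SetLike.coe_mem _⟩)

theorem isGradedRightIdeal_range_mul_of_mem_zero {a : R} (ha : a ∈ 𝒜 0) :
    IsGradedRightIdeal 𝒜 (Set.range (a * ·)) := by
  refine ⟨⟨⟨0, mul_zero a⟩, ?_, ?_⟩, ?_⟩
  · rintro _ ⟨r, rfl⟩ _ ⟨s, rfl⟩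
    exact ⟨r + s, mul_add a r s⟩
  · rintro _ ⟨r, rfl⟩ s
    exact ⟨r * s, (mul_assoc a r s).symm⟩
  · rintro _ ⟨r, rfl⟩ γ
    exact ⟨_, (coe_decompose_mul_of_left_mem_zero 𝒜 ha).symm⟩

theorem isGradedRightIdeal_rightAnnihilator {J : Set R} (hJ : IsGradedRightIdeal 𝒜 J) :
    IsGradedRightIdeal 𝒜 (rightAnnihilator J) := by
  refine ⟨⟨fun j _ => mul_zero j, fun x hx y hy j hj => by rw [mul_add, hx j hj, hy j hj, add_zero],
    fun x hx r j hj => by rw [← mul_assoc, hx j hj, zero_mul]⟩, fun x hx γ j hj => ?_⟩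
  refine mem_of_forall_decompose_mem 𝒜 (S := AddMonoidHom.mker (AddMonoidHom.mulRight _))
    fun μ => ?_
  rw [AddMonoidHom.mem_mker, AddMonoidHom.mulRight_apply,
    ← coe_decompose_mul_add_of_left_mem 𝒜 (SetLike.coe_mem _), hx _ (hJ.2 j hj μ), decompose_zero,
    DirectSum.zero_apply, ZeroMemClass.coe_zero]

theorem GradedEssentialIn.mono {A A' B : Set R} (h : GradedEssentialIn 𝒜 A B) (hAA' : A ⊆ A')
    (hA'B : A' ⊆ B) : GradedEssentialIn 𝒜 A' B := by
  refine ⟨hA'B, fun I hI hIB hne => ?_⟩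
  obtain ⟨x, ⟨hxA, hxI⟩, hx0⟩ := h.2 I hI hIB hne
  exact ⟨x, ⟨hAA' hxA, hxI⟩, hx0⟩

theorem mem_of_add_mem_of_inter_eq_zero {J K : Set R} (hJ : IsGradedRightIdeal 𝒜 J)
    (hK : IsGradedRightIdeal 𝒜 K) (hJK : ∀ x ∈ J, x ∈ K → x = 0) {j k : R} (hj : j ∈ J)
    (hk : k ∈ K) {δ : ι} (h : j + k ∈ 𝒜 δ) : j ∈ 𝒜 δ := by
  have hsum : (decompose 𝒜 j δ : R) + decompose 𝒜 k δ = j + k := by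
    rw [← AddSubgroup.coe_add, ← DirectSum.add_apply, ← decompose_add,
      decompose_of_mem_same 𝒜 h]
  have hdiff : j - decompose 𝒜 j δ = decompose 𝒜 k δ - k := by
    rw [sub_eq_sub_iff_add_eq_add, ← hsum, add_comm]
  have hj_eq : j = decompose 𝒜 j δ :=
    sub_eq_zero.1 (hJK _ (hJ.1.sub_mem hj (hJ.2 j hj δ)) (hdiff ▸ hK.1.sub_mem (hK.2 k hk δ) hk))
  rw [hj_eq]
  exact SetLike.coe_mem _

theorem GradedSelfInjective.exists_projection (hinj : GradedSelfInjective 𝒜) {J K : Set R}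
    (hJ : IsGradedRightIdeal 𝒜 J) (hK : IsGradedRightIdeal 𝒜 K) (hJK : ∀ x ∈ J, x ∈ K → x = 0) :
    ∃ e ∈ 𝒜 0, (∀ j ∈ J, e * j = j) ∧ ∀ k ∈ K, e * k = 0 := by
  have hf : ∀ {j k}, j ∈ J → k ∈ K → firstSummand J K (j + k) = j :=
    firstSummand_add hJ.1 hK.1 hJK
  obtain ⟨e, he, hfe⟩ := hinj (J + K) (hJ.add hK) 0 (firstSummand J K)
    (by
      rintro _ ⟨a, ha, b, hb, rfl⟩ _ ⟨c, hc, d, hd, rfl⟩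
      rw [add_add_add_comm, hf ha hb, hf hc hd, hf (hJ.1.2.1 a ha c hc) (hK.1.2.1 b hb d hd)])
    (by
      rintro _ ⟨a, ha, b, hb, rfl⟩ r
      rw [add_mul, hf ha hb, hf (hJ.1.2.2 a ha r) (hK.1.2.2 b hb r)])
    (by
      rintro δ _ ⟨a, ha, b, hb, rfl⟩ hδ
      rw [hf ha hb, zero_add]
      exact mem_of_add_mem_of_inter_eq_zero hJ hK hJK ha hb hδ)
  refine ⟨e, he, fun j hj => ?_, fun k hk => ?_⟩
  · have := hfe (j + 0) ⟨j, hj, 0, hK.1.1, rfl⟩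
    rw [hf hj hK.1.1, add_zero] at this
    exact this.symm
  · have := hfe (0 + k) ⟨0, hJ.1.1, k, hk, rfl⟩
    rw [hf hJ.1.1 hk, zero_add] at this
    exact this.symm

theorem GradedVNRegular.exists_homog_inner_inverse (hreg : GradedVNRegular 𝒜) {a : R} {δ : ι}
    (ha : a ∈ 𝒜 δ) : ∃ b ∈ 𝒜 (-δ), a * b * a = a := by
  obtain ⟨b, hb⟩ := hreg a ⟨δ, ha⟩
  have h1 := coe_decompose_mul_add_of_right_mem 𝒜 (a := a * b) (i := 0) ha
  have h2 := coe_decompose_mul_add_of_left_mem 𝒜 (b := b) (j := -δ) ha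
  rw [zero_add, hb, decompose_of_mem_same 𝒜 ha] at h1
  rw [add_neg_cancel] at h2
  exact ⟨_, SetLike.coe_mem _, by rw [← h2, ← h1]⟩

theorem GradedVNRegular.eq_zero_of_mem_rightAnnihilator (hreg : GradedVNRegular 𝒜) {J : Set R}
    (hJ : IsGradedRightIdeal 𝒜 J) {x : R} (hxJ : x ∈ J) (hxK : x ∈ rightAnnihilator J) :
    x = 0 := by
  refine mem_of_forall_decompose_mem 𝒜 (S := ⊥) fun γ => ?_
  have hzJ := hJ.2 x hxJ γ
  have hzK := (isGradedRightIdeal_rightAnnihilator hJ).2 x hxK γ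
  obtain ⟨b, hb⟩ := hreg _ ⟨γ, SetLike.coe_mem (decompose 𝒜 x γ)⟩
  rw [AddSubmonoid.mem_bot, ← hb]
  exact hzK _ (hJ.1.2.2 _ hzJ b)

theorem GradedVNRegular.gradedEssentialIn_add_rightAnnihilator (hreg : GradedVNRegular 𝒜)
    {J : Set R} (hJ : IsGradedTwoSidedIdeal 𝒜 J) :
    GradedEssentialIn 𝒜 (J + rightAnnihilator J) Set.univ := by
  refine ⟨Set.subset_univ _, fun I hI _ ⟨x, hxI, hx0⟩ => ?_⟩
  obtain ⟨y, hyI, ⟨γ, hyγ⟩, hy0⟩ := hI.exists_homog_ne_zero hxI hx0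
  by_cases hy : y ∈ rightAnnihilator J
  · exact ⟨y, ⟨⟨0, hJ.1.1.1, y, hy, zero_add y⟩, hyI⟩, hy0⟩
  obtain ⟨j, hjJ, ⟨μ, hjμ⟩, hjy⟩ : ∃ j ∈ J, IsHomog 𝒜 j ∧ j * y ≠ 0 := by
    by_contra! h
    exact hy fun j hj => mem_of_forall_decompose_mem 𝒜
      (S := AddMonoidHom.mker (AddMonoidHom.mulRight y)) fun μ =>
        h _ (hJ.1.2 j hj μ) ⟨μ, SetLike.coe_mem _⟩
  -- `j * y = j * y * b * j * y`, so `y * b * j * y ∈ I ∩ J` is nonzero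
  obtain ⟨b, hb⟩ := hreg (j * y) ⟨μ + γ, SetLike.mul_mem_graded hjμ hyγ⟩
  have htJ : y * (b * (j * y)) ∈ J := hJ.2 _ (hJ.2 _ (hJ.1.1.2.2 j hjJ y) b) y
  refine ⟨y * (b * (j * y)), ⟨⟨_, htJ, 0, (isGradedRightIdeal_rightAnnihilator hJ.1).1.1,
    add_zero _⟩, hI.1.2.2 y hyI _⟩, fun ht0 => hjy ?_⟩
  calc j * y = j * (y * (b * (j * y))) := by rw [← mul_assoc, ← mul_assoc, hb]
    _ = 0 := by rw [ht0, mul_zero]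

theorem GradedVNRegular.eq_zero_of_homog_of_forall_mul_eq_zero (hreg : GradedVNRegular 𝒜)
    {A : Set R} (hA : GradedEssentialIn 𝒜 A Set.univ) {u : R} {δ : ι} (huδ : u ∈ 𝒜 δ)
    (hu : ∀ a ∈ A, u * a = 0) : u = 0 := by
  by_contra hu0
  obtain ⟨b, hb, hbu⟩ := hreg.exists_homog_inner_inverse huδ
  -- `b * u` is a nonzero idempotent of degree `0`, so `b * u * R` meets `A`
  have hbu0 : b * u ∈ 𝒜 0 := by
    simpa using SetLike.mul_mem_graded hb huδ
  obtain ⟨_, ⟨ha, r, rfl⟩, hne⟩ := hA.2 _ (isGradedRightIdeal_range_mul_of_mem_zero hbu0)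
    (Set.subset_univ _)
    ⟨b * u, ⟨1, mul_one _⟩, fun h => hu0 (by rw [← hbu, mul_assoc, h, mul_zero])⟩
  have hur : u * r = 0 := calc
    u * r = u * (b * u * r) := by rw [← mul_assoc, ← mul_assoc, hbu]
    _ = 0 := hu _ ha
  exact hne (show b * u * r = 0 by rw [mul_assoc, hur, mul_zero])

theorem GradedVNRegular.eq_zero_of_forall_mul_eq_zero (hreg : GradedVNRegular 𝒜) {A : Set R}
    (hAg : IsGradedRightIdeal 𝒜 A) (hA : GradedEssentialIn 𝒜 A Set.univ) {u : R}
    (hu : ∀ a ∈ A, u * a = 0) : u = 0 := by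
  refine mem_of_forall_decompose_mem 𝒜 (S := ⊥) fun δ =>
    hreg.eq_zero_of_homog_of_forall_mul_eq_zero hA (SetLike.coe_mem _) fun a ha => ?_
  refine mem_of_forall_decompose_mem 𝒜 (S := AddMonoidHom.mker (AddMonoidHom.mulLeft _))
    fun γ => ?_
  rw [AddMonoidHom.mem_mker, AddMonoidHom.coe_mulLeft,
    ← coe_decompose_mul_add_of_right_mem 𝒜 (SetLike.coe_mem _), hu _ (hAg.2 a ha γ),
    decompose_zero, DirectSum.zero_apply, ZeroMemClass.coe_zero]

end Graded

/-- Let `R` be a graded von Neumann regular graded right self-injective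
ring and `J` a graded two-sided ideal such that `R/J` is graded nonsingular, i.e. for
every homogeneous `x ∉ J` the graded right ideal `{r | x * r ∈ J}` is not graded
essential in `R`. Then `J = eR` for some central homogeneous idempotent `e`. -/
theorem ideal_is_generated_by_central_idempotent_of_nonsingular_quotient
    [DecidableEq ι] [AddCommGroup ι] [Ring R] (𝒜 : ι → AddSubgroup R) [GradedRing 𝒜]
    (hreg : GradedVNRegular 𝒜) (hinj : GradedSelfInjective 𝒜)
    (J : Set R) (hJ : IsGradedTwoSidedIdeal 𝒜 J)
    (hns : ∀ x : R, IsHomog 𝒜 x → x ∉ J →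
      ¬ GradedEssentialIn 𝒜 {r : R | x * r ∈ J} Set.univ) :
    ∃ e : R, IsHomog 𝒜 e ∧ e * e = e ∧ (∀ r : R, e * r = r * e) ∧
      J = {x : R | e * x = x} := by
  have hK := isGradedRightIdeal_rightAnnihilator hJ.1
  obtain ⟨e, he0, heJ, heK⟩ := hinj.exists_projection hJ.1 hK fun _ hxJ hxK =>
    hreg.eq_zero_of_mem_rightAnnihilator hJ.1 hxJ hxK
  have hJK_ess := hreg.gradedEssentialIn_add_rightAnnihilator hJ
  have he : e ∈ J := by
    by_contra he
    refine hns e ⟨0, he0⟩ he (hJK_ess.mono ?_ (Set.subset_univ _))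
    rintro _ ⟨j, hj, k, hk, rfl⟩
    show e * (j + k) ∈ J
    rwa [mul_add, heJ j hj, heK k hk, add_zero]
  have hJe : ∀ j ∈ J, j * e = j := by
    intro j hj
    refine (sub_eq_zero.1 (hreg.eq_zero_of_forall_mul_eq_zero (hJ.1.add hK) hJK_ess ?_)).symm
    rintro _ ⟨j', hj', k, hk, rfl⟩
    rw [sub_mul, mul_assoc, mul_add e, heJ j' hj', heK k hk, add_zero, mul_add, hk j hj, add_zero,
      sub_self]
  refine ⟨e, ⟨0, he0⟩, heJ e he, fun r => ?_, ?_⟩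
  · calc e * r = e * r * e := (hJe _ (hJ.1.1.2.2 e he r)).symm
      _ = r * e := by rw [mul_assoc, heJ _ (hJ.2 e he r)]
  · ext x
    exact ⟨heJ x, fun hx => hx ▸ hJ.1.1.2.2 e he x⟩
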